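/- Let 𝒢 be a class of left R-modules closed under extensions and 𝒳 ⊆ 𝒢 a subclass. Suppose 𝒢 is right 𝒳-periodic, i.e., for every R-module M, M ∈ 𝒢 if and only if there exists a short exact sequence 0 → M → X → G → 0 with X ∈ 𝒳 and G ∈ 𝒢. Then 𝒢 is closed under kernels of epimorphisms: for any short exact sequence 0 → M → N → L → 0 with N, L ∈ 𝒢, one has M ∈ 𝒢. -/
import Mathlib


open CategoryTheory CategoryTheory.Limits

set_option autoImplicit false

universe u

variable {R : Type u} [Ring R]

/-- A short exact sequence of `R`-modules encoded by two linear maps. -/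
def IsSES {A B C : ModuleCat.{u} R} (f : A →ₗ[R] B) (g : B →ₗ[R] C) : Prop :=
  Function.Injective f ∧ Function.Exact f g ∧ Function.Surjective g

/-- If `𝒢` is closed under extensions, `𝒳 ⊆ 𝒢` and `𝒢` is right
`𝒳`-periodic, then `𝒢` is closed under kernels of epimorphisms. -/
theorem statement1 (𝒢 𝒳 : ModuleCat.{u} R → Prop)
    (hsub : ∀ M, 𝒳 M → 𝒢 M)
    (hext : ∀ (A B C : ModuleCat.{u} R) (f : A →ₗ[R] B) (g : B →ₗ[R] C),
      IsSES f g → 𝒢 A → 𝒢 C → 𝒢 B)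
    (hper : ∀ M : ModuleCat.{u} R, 𝒢 M ↔
      ∃ (X G : ModuleCat.{u} R) (f : M →ₗ[R] X) (g : X →ₗ[R] G), 𝒳 X ∧ 𝒢 G ∧ IsSES f g)
    {M N L : ModuleCat.{u} R} (f : M →ₗ[R] N) (g : N →ₗ[R] L)
    (hses : IsSES f g) (hN : 𝒢 N) (hL : 𝒢 L) : 𝒢 M := by
  obtain ⟨hfinj, hfg, hgsurj⟩ := hses
  obtain ⟨X, G, i, p, hX, hG, hiinj, hip, hpsurj⟩ := (hper N).mp hN
  have hkerg : LinearMap.ker g = LinearMap.range f := LinearMap.exact_iff.mp hfg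
  have hkerp : LinearMap.ker p = LinearMap.range i := LinearMap.exact_iff.mp hip
  set j : M →ₗ[R] X := i.comp f with hj
  have hjinj : Function.Injective j := hiinj.comp hfinj
  set Q : ModuleCat.{u} R := ModuleCat.of R (X ⧸ LinearMap.range j) with hQdef
  let q : X →ₗ[R] Q := (LinearMap.range j).mkQ
  have hqsurj : Function.Surjective q := Submodule.mkQ_surjective _
  have hkerq : LinearMap.ker q = LinearMap.range j := Submodule.ker_mkQ _
  -- π : Q → G
  have hrange_le : LinearMap.range j ≤ LinearMap.ker p := by
    rintro _ ⟨m, rfl⟩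
    rw [hkerp]
    exact ⟨f m, rfl⟩
  let π : Q →ₗ[R] G := (LinearMap.range j).liftQ p hrange_le
  have hπq : ∀ x : X, π (q x) = p x := fun x => rfl
  -- ℓ : L → Q
  have hker_le : LinearMap.ker g ≤ LinearMap.ker (q.comp i) := by
    rw [hkerg]
    rintro _ ⟨m, rfl⟩
    simp only [LinearMap.mem_ker, LinearMap.comp_apply]
    exact (Submodule.Quotient.mk_eq_zero _).mpr ⟨m, rfl⟩
  let e : (N ⧸ LinearMap.ker g) ≃ₗ[R] L := g.quotKerEquivOfSurjective hgsurj
  have he : ∀ n : N, e (Submodule.Quotient.mk n) = g n := fun n => rfl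
  let ℓ : L →ₗ[R] Q :=
    ((LinearMap.ker g).liftQ (q.comp i) hker_le).comp (e.symm : L →ₗ[R] _)
  have hℓg : ∀ n : N, ℓ (g n) = q (i n) := by
    intro n
    have : e.symm (g n) = Submodule.Quotient.mk n := by
      apply e.injective; rw [LinearEquiv.apply_symm_apply, he]
    simp only [ℓ, LinearMap.comp_apply, LinearEquiv.coe_coe, this]
    rfl
  have hℓinj : Function.Injective ℓ := by
    rw [injective_iff_map_eq_zero]
    intro l hl
    obtain ⟨n, rfl⟩ := hgsurj l
    rw [hℓg] at hl
    have : i n ∈ LinearMap.range j := by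
      rw [← hkerq]; exact hl
    obtain ⟨m, hm⟩ := this
    have : f m = n := hiinj hm
    rw [← this, ← LinearMap.mem_ker, hkerg]
    exact ⟨m, rfl⟩
  have hℓπ : Function.Exact ℓ π := by
    rw [LinearMap.exact_iff]
    ext x
    constructor
    · intro hx
      obtain ⟨y, rfl⟩ := hqsurj x
      have : p y = 0 := by rw [← hπq]; exact hx
      have : y ∈ LinearMap.range i := by rw [← hkerp]; exact this
      obtain ⟨n, rfl⟩ := this
      exact ⟨g n, (hℓg n)⟩
    · rintro ⟨l, rfl⟩
      obtain ⟨n, rfl⟩ := hgsurj l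
      rw [hℓg]
      show π (q (i n)) = 0
      rw [hπq, ← LinearMap.mem_ker, hkerp]
      exact ⟨n, rfl⟩
  have hπsurj : Function.Surjective π := by
    intro y
    obtain ⟨x, rfl⟩ := hpsurj y
    exact ⟨q x, hπq x⟩
  have hQ : 𝒢 Q := hext L Q G ℓ π ⟨hℓinj, hℓπ, hπsurj⟩ hL hG
  exact (hper M).mpr ⟨X, Q, j, q, hX, hQ, hjinj, LinearMap.exact_iff.mpr hkerq, hqsurj⟩
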